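/- arXiv:1903.10337 — 3 statements merged into one kernel-verified Lean document; each statement's English description precedes it below -/
import Mathlib

section
/- The function u(x,t) = tanh((x+t)/√2) satisfies, for all real x and t, the fourth-order Cahn–Hilliard equation ∂ₜu = ∂ₓu + 6u(∂ₓu)² + 3u²∂ₓ²u − ∂ₓ²u − ∂ₓ⁴u, together with the initial condition u(x,0) = tanh(x/√2). -/
lemma tanh_hasDerivAt (x : ℝ) : HasDerivAt Real.tanh (1 - Real.tanh x ^ 2) x := by
  have hc : Real.cosh x ≠ 0 := ne_of_gt (Real.cosh_pos x)
  have h := (Real.hasDerivAt_sinh x).div (Real.hasDerivAt_cosh x) hc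
  have hf : (fun y => Real.sinh y / Real.cosh y) = Real.tanh := by
    funext y; rw [Real.tanh_eq_sinh_div_cosh]
  rw [show Real.sinh / Real.cosh = fun y => Real.sinh y / Real.cosh y from rfl, hf] at h
  convert h using 1
  · rfl
  · rfl
  have h2 := Real.cosh_sq_sub_sinh_sq x
  rw [Real.tanh_eq_sinh_div_cosh]
  field_simp

lemma hD (t x : ℝ) :
    HasDerivAt (fun y => Real.tanh ((y + t) / Real.sqrt 2))
      ((1 - Real.tanh ((x + t) / Real.sqrt 2) ^ 2) / Real.sqrt 2) x := by
  have h := (tanh_hasDerivAt ((x + t) / Real.sqrt 2)).comp x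
    (((hasDerivAt_id x).add_const t).div_const (Real.sqrt 2))
  convert h using 1
  · rfl
  · rfl
  · rfl
  ring

/-- The function `u(x,t) = tanh((x+t)/√2)` satisfies the fourth-order Cahn–Hilliard
equation `∂ₜu = ∂ₓu + 6u(∂ₓu)² + 3u²∂ₓ²u − ∂ₓ²u − ∂ₓ⁴u` with initial condition
`u(x,0) = tanh(x/√2)`. -/
theorem stmt_0 (u : ℝ → ℝ → ℝ)
    (hu : ∀ x t : ℝ, u x t = Real.tanh ((x + t) / Real.sqrt 2)) :
    (∀ x t : ℝ,
      deriv (fun s => u x s) t =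
        deriv (fun y => u y t) x
        + 6 * u x t * (deriv (fun y => u y t) x) ^ 2
        + 3 * (u x t) ^ 2 * iteratedDeriv 2 (fun y => u y t) x
        - iteratedDeriv 2 (fun y => u y t) x
        - iteratedDeriv 4 (fun y => u y t) x)
    ∧ (∀ x : ℝ, u x 0 = Real.tanh (x / Real.sqrt 2)) := by
  have hs0 : Real.sqrt 2 ≠ 0 := by positivity
  have hs2 : Real.sqrt 2 ^ 2 = 2 := Real.sq_sqrt (by norm_num)
  constructor
  · intro x t
    set a := Real.sqrt 2 with ha
    set T : ℝ → ℝ := fun y => Real.tanh ((y + t) / a) with hT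
    -- time derivative
    have hfun : (fun s => u x s) = fun s => Real.tanh ((s + x) / a) := by
      funext s; rw [hu, add_comm]
    have dt : deriv (fun s => u x s) t = (1 - T x ^ 2) / a := by
      rw [hfun, (hD x t).deriv, hT]; rw [add_comm t x]
    -- space function
    have hfun2 : (fun y => u y t) = fun y => Real.tanh ((y + t) / a) := by
      funext y; rw [hu]
    -- first derivative
    have e1 : deriv (fun y => Real.tanh ((y + t) / a)) = fun y => (1 - T y ^ 2) / a :=
      funext fun y => (hD t y).deriv
    -- second derivative
    have h2 : ∀ y, HasDerivAt (fun y => (1 - T y ^ 2) / a)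
        ((-(2 * T y ^ 1 * ((1 - T y ^ 2) / a)) / a)) y := by
      intro y
      exact (((hD t y).pow 2).const_sub 1).div_const a
    have e2 : deriv (fun y => (1 - T y ^ 2) / a) = fun y => T y ^ 3 - T y := by
      funext y
      rw [(h2 y).deriv]
      field_simp
      linear_combination (T y - T y ^ 3) * hs2
    -- third derivative
    have e3 : deriv (fun y => T y ^ 3 - T y)
        = fun y => (3 * T y ^ 2 - 1) * (1 - T y ^ 2) / a := by
      funext y
      rw [HasDerivAt.deriv (f := fun y => T y ^ 3 - T y) (((hD t y).pow 3).sub (hD t y))]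
      push_cast; ring
    -- fourth derivative
    have e4 : deriv (fun y => (3 * T y ^ 2 - 1) * (1 - T y ^ 2) / a)
        = fun y => T y * (1 - T y ^ 2) * (4 - 6 * T y ^ 2) := by
      funext y
      rw [HasDerivAt.deriv (f := fun y => (3 * T y ^ 2 - 1) * (1 - T y ^ 2) / a) ((((((hD t y).pow 2).const_mul 3 |>.sub_const 1).mul
        (((hD t y).pow 2).const_sub 1)).div_const a))]
      simp only [Pi.pow_apply]
      push_cast
      field_simp
      linear_combination (-(T y) * (1 - T y ^ 2) * (4 - 6 * T y ^ 2)) * hs2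
    have i2 : iteratedDeriv 2 (fun y => u y t) x = T x ^ 3 - T x := by
      rw [hfun2]
      rw [show iteratedDeriv 2 (fun y => Real.tanh ((y + t) / a))
            = deriv (iteratedDeriv 1 (fun y => Real.tanh ((y + t) / a))) from iteratedDeriv_succ,
          iteratedDeriv_one, e1, e2]
    have i4 : iteratedDeriv 4 (fun y => u y t) x
        = T x * (1 - T x ^ 2) * (4 - 6 * T x ^ 2) := by
      rw [hfun2]
      rw [show iteratedDeriv 4 (fun y => Real.tanh ((y + t) / a))
            = deriv (iteratedDeriv 3 (fun y => Real.tanh ((y + t) / a))) from iteratedDeriv_succ,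
          show iteratedDeriv 3 (fun y => Real.tanh ((y + t) / a))
            = deriv (iteratedDeriv 2 (fun y => Real.tanh ((y + t) / a))) from iteratedDeriv_succ,
          show iteratedDeriv 2 (fun y => Real.tanh ((y + t) / a))
            = deriv (iteratedDeriv 1 (fun y => Real.tanh ((y + t) / a))) from iteratedDeriv_succ,
          iteratedDeriv_one, e1, e2, e3, e4]
    have d1 : deriv (fun y => u y t) x = (1 - T x ^ 2) / a := by
      rw [hfun2, e1]
    have hux : u x t = T x := hu x t
    rw [dt, d1, i2, i4, hux]
    rw [div_pow, hs2]
    ring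
  · intro x
    rw [hu]; norm_num
end

section
/- Let α > 0 and β > 0 be real numbers, let t > 0, and let f : [0,t] → ℝ be continuous. Then (1/Γ(α)) ∫₀ᵗ (t−s)^{α−1} · [(1/Γ(β)) ∫₀^s (s−ξ)^{β−1} f(ξ) dξ] ds = (1/Γ(α+β)) ∫₀ᵗ (t−s)^{α+β−1} f(s) ds, i.e. J^α(J^β f)(t) = J^{α+β} f(t). -/
open MeasureTheory intervalIntegral Set

lemma beta_real {α β : ℝ} (hα : 0 < α) (hβ : 0 < β) :
    ∫ x in (0:ℝ)..1, x ^ (β - 1) * (1 - x) ^ (α - 1)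
      = Real.Gamma α * Real.Gamma β / Real.Gamma (α + β) := by
  have hG : (0:ℝ) < Real.Gamma (α + β) := Real.Gamma_pos_of_pos (by linarith)
  have key := Complex.Gamma_mul_Gamma_eq_betaIntegral (s := (β:ℂ)) (t := (α:ℂ))
    (by simpa using hβ) (by simpa using hα)
  have hofReal : Complex.betaIntegral β α
      = ((∫ x in (0:ℝ)..1, x ^ (β - 1) * (1 - x) ^ (α - 1) : ℝ) : ℂ) := by
    rw [Complex.betaIntegral]
    rw [intervalIntegral.integral_of_le zero_le_one,
        intervalIntegral.integral_of_le zero_le_one]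
    have cast : ∫ x in Ioc (0:ℝ) 1, ((x ^ (β - 1) * (1 - x) ^ (α - 1) : ℝ) : ℂ)
        = ((∫ x in Ioc (0:ℝ) 1, x ^ (β - 1) * (1 - x) ^ (α - 1) : ℝ) : ℂ) :=
      _root_.integral_ofReal
    rw [← cast]
    refine setIntegral_congr_ae measurableSet_Ioc ?_
    filter_upwards with x hx
    have hx0 : (0:ℝ) ≤ x := le_of_lt hx.1
    have hx1 : (0:ℝ) ≤ 1 - x := by linarith [hx.2]
    push_cast
    rw [Complex.ofReal_cpow hx0, Complex.ofReal_cpow hx1]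
    push_cast
    ring
  rw [hofReal] at key
  rw [Complex.Gamma_ofReal, Complex.Gamma_ofReal, ← Complex.ofReal_add,
    Complex.Gamma_ofReal, ← Complex.ofReal_mul, ← Complex.ofReal_mul] at key
  have := Complex.ofReal_injective key
  rw [add_comm β α] at this
  field_simp
  linarith [this]

lemma kernel_eval {α β : ℝ} (hα : 0 < α) (hβ : 0 < β) {ξ t : ℝ} (hξ : ξ < t) :
    ∫ s in ξ..t, (t - s) ^ (α - 1) * (s - ξ) ^ (β - 1)
      = (t - ξ) ^ (α + β - 1) * (Real.Gamma α * Real.Gamma β / Real.Gamma (α + β)) := by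
  set c : ℝ := t - ξ with hc
  have hc0 : 0 < c := by simp [hc]; linarith
  have h1 : ∫ x in (0:ℝ)..1, (t - (c * x + ξ)) ^ (α - 1) * ((c * x + ξ) - ξ) ^ (β - 1)
      = c⁻¹ • ∫ s in ξ..t, (t - s) ^ (α - 1) * (s - ξ) ^ (β - 1) := by
    have := intervalIntegral.integral_comp_mul_add
      (fun s => (t - s) ^ (α - 1) * (s - ξ) ^ (β - 1)) hc0.ne' ξ (a := 0) (b := 1)
    simpa [hc] using this
  have h2 : ∫ x in (0:ℝ)..1, (t - (c * x + ξ)) ^ (α - 1) * ((c * x + ξ) - ξ) ^ (β - 1)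
      = c ^ (α - 1) * c ^ (β - 1) * ∫ x in (0:ℝ)..1, x ^ (β - 1) * (1 - x) ^ (α - 1) := by
    rw [← intervalIntegral.integral_const_mul]
    refine intervalIntegral.integral_congr ?_
    intro x hx
    rw [Set.uIcc_of_le zero_le_one] at hx
    have hx0 : 0 ≤ x := hx.1
    have hx1 : 0 ≤ 1 - x := by linarith [hx.2]
    have e1 : t - (c * x + ξ) = c * (1 - x) := by simp [hc]; ring
    have e2 : (c * x + ξ) - ξ = c * x := by ring
    dsimp only
    rw [e1, e2, Real.mul_rpow hc0.le hx1, Real.mul_rpow hc0.le hx0]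
    ring
  have h3 : (∫ s in ξ..t, (t - s) ^ (α - 1) * (s - ξ) ^ (β - 1))
      = c • ∫ x in (0:ℝ)..1, (t - (c * x + ξ)) ^ (α - 1) * ((c * x + ξ) - ξ) ^ (β - 1) := by
    rw [h1, smul_smul, mul_inv_cancel₀ hc0.ne', one_smul]
  rw [h3, h2, beta_real hα hβ, smul_eq_mul]
  have : c * (c ^ (α - 1) * c ^ (β - 1)) = c ^ (α + β - 1) := by
    rw [← Real.rpow_add hc0]
    nth_rewrite 1 [← Real.rpow_one c]
    rw [← Real.rpow_add hc0]
    ring_nf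
  rw [← mul_assoc, this]

lemma swap_lemma (α β t : ℝ) (hα : 0 < α) (hβ : 0 < β) (ht : 0 < t)
    (f : ℝ → ℝ) (hf : ContinuousOn f (Set.Icc 0 t)) :
    ∫ s in (0:ℝ)..t, (t - s) ^ (α - 1) * (∫ ξ in (0:ℝ)..s, (s - ξ) ^ (β - 1) * f ξ)
      = (Real.Gamma α * Real.Gamma β / Real.Gamma (α + β))
          * ∫ s in (0:ℝ)..t, (t - s) ^ (α + β - 1) * f s := by
  -- bound for f
  obtain ⟨M, hM⟩ := (isCompact_Icc (a := (0:ℝ)) (b := t)).exists_bound_of_continuousOn hf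
  have hM0 : 0 ≤ M := le_trans (norm_nonneg (f 0)) (hM 0 (by constructor <;> linarith))
  set μ : Measure ℝ := volume.restrict (Ioc 0 t) with hμ
  set F : ℝ → ℝ → ℝ := fun s ξ =>
    Set.indicator (Iio s) (fun ξ => (t - s) ^ (α - 1) * (s - ξ) ^ (β - 1) * f ξ) ξ with hF
  -- measurability on the product
  have hfm : AEStronglyMeasurable (fun p : ℝ × ℝ => f p.2) (μ.prod μ) := by
    have h1 : ContinuousOn (fun p : ℝ × ℝ => f p.2) (univ ×ˢ Icc 0 t) :=
      hf.comp continuous_snd.continuousOn (fun p hp => hp.2)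
    have h2 := h1.aestronglyMeasurable (MeasurableSet.univ.prod measurableSet_Icc)
      (μ := volume.prod volume)
    rw [hμ, Measure.prod_restrict]
    exact h2.mono_measure (Measure.restrict_mono
      (Set.prod_mono (subset_univ _) Ioc_subset_Icc_self) le_rfl)
  have hmeas : AEStronglyMeasurable (Function.uncurry F) (μ.prod μ) := by
    have : Function.uncurry F = Set.indicator {p : ℝ × ℝ | p.2 < p.1}
        (fun p => (t - p.1) ^ (α - 1) * (p.1 - p.2) ^ (β - 1) * f p.2) := by
      funext p
      rcases p with ⟨s, ξ⟩
      by_cases h : ξ < s <;>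
        simp [Function.uncurry, hF, Set.indicator, h]
    rw [this]
    refine AEStronglyMeasurable.indicator ?_ (measurableSet_lt measurable_snd measurable_fst)
    have hm : Measurable (fun p : ℝ × ℝ => (t - p.1) ^ (α - 1) * (p.1 - p.2) ^ (β - 1)) := by
      fun_prop
    exact hm.aestronglyMeasurable.mul hfm
  -- integrability of the β-kernel
  have hker : ∀ s : ℝ, IntervalIntegrable (fun ξ => (s - ξ) ^ (β - 1)) volume 0 s := by
    intro s
    have := (intervalIntegral.intervalIntegrable_rpow' (a := 0) (b := s)
      (by linarith : (-1:ℝ) < β - 1)).comp_sub_left s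
    simpa using this.symm
  have hkerα : IntervalIntegrable (fun s => (t - s) ^ (α - 1)) volume 0 t := by
    have := (intervalIntegral.intervalIntegrable_rpow' (a := 0) (b := t)
      (by linarith : (-1:ℝ) < α - 1)).comp_sub_left t
    simpa using this.symm
  -- value of ∫ (s-ξ)^(β-1)
  have hkerval : ∀ s : ℝ, 0 ≤ s → (∫ ξ in (0:ℝ)..s, (s - ξ) ^ (β - 1)) = s ^ β / β := by
    intro s hs
    rw [intervalIntegral.integral_comp_sub_left (fun u => u ^ (β - 1)) s]
    simp only [sub_self, sub_zero]
    rw [integral_rpow (Or.inl (by linarith))]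
    rw [Real.zero_rpow (by linarith : β - 1 + 1 ≠ 0)]
    norm_num [sub_add_cancel]
  -- set identity
  have hset : ∀ s : ℝ, s ≤ t → Iio s ∩ Ioc 0 t = Ioo 0 s := by
    intro s hst
    ext x
    simp only [mem_inter_iff, mem_Iio, mem_Ioc, mem_Ioo]
    constructor
    · rintro ⟨h1, h2, h3⟩; exact ⟨h2, h1⟩
    · rintro ⟨h1, h2⟩; exact ⟨h2, h1, by linarith⟩
  have hsetξ : ∀ ξ : ℝ, 0 < ξ → Ioi ξ ∩ Ioc 0 t = Ioc ξ t := by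
    intro ξ hξ
    ext x
    simp only [mem_inter_iff, mem_Ioi, mem_Ioc]
    constructor
    · rintro ⟨h1, h2, h3⟩; exact ⟨h1, h3⟩
    · rintro ⟨h1, h2⟩; exact ⟨h1, by linarith, h2⟩
  -- interval integrability of inner kernel * f
  have hkf : ∀ s ∈ Ioc (0:ℝ) t,
      IntervalIntegrable (fun ξ => (s - ξ) ^ (β - 1) * f ξ) volume 0 s := by
    intro s hs
    refine (hker s).mul_continuousOn (hf.mono ?_)
    rw [uIcc_of_le hs.1.le]
    exact Icc_subset_Icc le_rfl hs.2
  -- inner integrability, as functions of ξ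
  have hinner : ∀ s ∈ Ioc (0:ℝ) t, Integrable (F s) μ := by
    intro s hs
    rw [hμ, hF]
    rw [integrable_indicator_iff measurableSet_Iio]
    rw [IntegrableOn, Measure.restrict_restrict measurableSet_Iio, hset s hs.2]
    have k : IntervalIntegrable (fun ξ => (t - s) ^ (α - 1) * ((s - ξ) ^ (β - 1) * f ξ))
        volume 0 s := (hkf s hs).const_mul _
    have := ((intervalIntegrable_iff_integrableOn_Ioc_of_le hs.1.le).mp k).mono_set
      Ioo_subset_Ioc_self
    simpa [mul_assoc, IntegrableOn] using this
  -- similar with |f| replaced by bound 1 (kernel alone)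
  have hinner2 : ∀ s ∈ Ioc (0:ℝ) t,
      Integrable (Set.indicator (Iio s) (fun ξ => (s - ξ) ^ (β - 1))) μ := by
    intro s hs
    rw [hμ, integrable_indicator_iff measurableSet_Iio]
    rw [IntegrableOn, Measure.restrict_restrict measurableSet_Iio, hset s hs.2]
    exact ((intervalIntegrable_iff_integrableOn_Ioc_of_le hs.1.le).mp (hker s)).mono_set
      Ioo_subset_Ioc_self
  -- full integrability on the product
  have hI : Integrable (Function.uncurry F) (μ.prod μ) := by
    rw [integrable_prod_iff hmeas]
    constructor
    · filter_upwards [ae_restrict_mem measurableSet_Ioc] with s hs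
      exact hinner s hs
    · refine Integrable.mono' (g := fun s => (t - s) ^ (α - 1) * (M * (t ^ β / β)))
        (((intervalIntegrable_iff_integrableOn_Ioc_of_le ht.le).mp hkerα).mul_const _)
        hmeas.norm.integral_prod_right' ?_
      filter_upwards [ae_restrict_mem measurableSet_Ioc] with s hs
      simp only [Function.uncurry_apply_pair]
      have h0 : 0 ≤ ∫ ξ, ‖F s ξ‖ ∂μ := integral_nonneg (fun ξ => norm_nonneg _)
      rw [Real.norm_of_nonneg h0]
      have hts : (0:ℝ) ≤ (t - s) ^ (α - 1) := Real.rpow_nonneg (by linarith [hs.2]) _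
      have step1 : ∫ ξ, ‖F s ξ‖ ∂μ ≤ ∫ ξ, (t - s) ^ (α - 1) * M *
          Set.indicator (Iio s) (fun ξ => (s - ξ) ^ (β - 1)) ξ ∂μ := by
        refine integral_mono_ae (hinner s hs).norm
          (((hinner2 s hs).const_mul _)) ?_
        filter_upwards [ae_restrict_mem measurableSet_Ioc] with ξ hξ
        by_cases hlt : ξ < s
        · simp only [hF, Set.indicator_of_mem (mem_Iio.mpr hlt)]
          have h1 : (0:ℝ) ≤ (s - ξ) ^ (β - 1) := Real.rpow_nonneg (by linarith) _
          have h2 : |f ξ| ≤ M := hM ξ ⟨hξ.1.le, hξ.2⟩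
          rw [Real.norm_eq_abs, abs_mul, abs_mul, abs_of_nonneg hts, abs_of_nonneg h1]
          calc (t - s) ^ (α - 1) * (s - ξ) ^ (β - 1) * |f ξ|
              ≤ (t - s) ^ (α - 1) * (s - ξ) ^ (β - 1) * M := by
                apply mul_le_mul_of_nonneg_left h2 (by positivity)
            _ = (t - s) ^ (α - 1) * M * (s - ξ) ^ (β - 1) := by ring
        · simp only [hF, Set.indicator_of_notMem (fun h => hlt (mem_Iio.mp h))]
          simp
      refine le_trans step1 ?_
      rw [MeasureTheory.integral_const_mul, hμ, MeasureTheory.integral_indicator measurableSet_Iio,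
        Measure.restrict_restrict measurableSet_Iio, hset s hs.2,
        ← integral_Ioc_eq_integral_Ioo, ← intervalIntegral.integral_of_le hs.1.le,
        hkerval s hs.1.le]
      have : s ^ β / β ≤ t ^ β / β := by
        gcongr
        · exact hs.1.le
        · exact hs.2
      calc (t - s) ^ (α - 1) * M * (s ^ β / β)
          ≤ (t - s) ^ (α - 1) * M * (t ^ β / β) := by
            apply mul_le_mul_of_nonneg_left this (by positivity)
        _ = (t - s) ^ (α - 1) * (M * (t ^ β / β)) := by ring
  -- Fubini
  have swap := integral_integral_swap (f := F) hI
  -- identify LHS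
  have lhs_eq : ∫ s, (∫ ξ, F s ξ ∂μ) ∂μ
      = ∫ s in (0:ℝ)..t, (t - s) ^ (α - 1) * (∫ ξ in (0:ℝ)..s, (s - ξ) ^ (β - 1) * f ξ) := by
    rw [intervalIntegral.integral_of_le ht.le]
    refine setIntegral_congr_ae measurableSet_Ioc ?_
    filter_upwards with s hs
    rw [hF]
    rw [hμ, MeasureTheory.integral_indicator measurableSet_Iio,
      Measure.restrict_restrict measurableSet_Iio, hset s hs.2,
      ← integral_Ioc_eq_integral_Ioo, ← intervalIntegral.integral_of_le hs.1.le]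
    simp_rw [mul_assoc]
    rw [intervalIntegral.integral_const_mul]
  -- identify RHS
  have rhs_eq : ∫ ξ, (∫ s, F s ξ ∂μ) ∂μ
      = (Real.Gamma α * Real.Gamma β / Real.Gamma (α + β))
          * ∫ s in (0:ℝ)..t, (t - s) ^ (α + β - 1) * f s := by
    rw [intervalIntegral.integral_of_le ht.le, hμ]
    rw [integral_Ioc_eq_integral_Ioo, integral_Ioc_eq_integral_Ioo]
    rw [← MeasureTheory.integral_const_mul]
    refine setIntegral_congr_ae measurableSet_Ioo ?_
    filter_upwards with ξ hξ
    have hfun : (fun s => F s ξ)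
        = Set.indicator (Ioi ξ) (fun s => (t - s) ^ (α - 1) * (s - ξ) ^ (β - 1) * f ξ) := by
      funext s
      by_cases h : ξ < s
      · rw [hF]
        simp only [Set.indicator_of_mem (mem_Iio.mpr h), Set.indicator_of_mem (mem_Ioi.mpr h)]
      · rw [hF]
        simp only [Set.indicator_of_notMem (fun hh => h (mem_Iio.mp hh)),
          Set.indicator_of_notMem (fun hh => h (mem_Ioi.mp hh))]
    rw [hfun]
    rw [MeasureTheory.integral_indicator measurableSet_Ioi,
      Measure.restrict_restrict measurableSet_Ioi, hsetξ ξ hξ.1,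
      ← intervalIntegral.integral_of_le hξ.2.le]
    rw [intervalIntegral.integral_mul_const, kernel_eval hα hβ hξ.2]
    ring
  rw [← lhs_eq, swap, rhs_eq]

/-- Semigroup property of the Riemann–Liouville fractional integral:
`J^α (J^β f) (t) = J^{α+β} f (t)` for continuous `f` on `[0,t]`. -/
theorem stmt_3 (α β t : ℝ) (hα : 0 < α) (hβ : 0 < β) (ht : 0 < t)
    (f : ℝ → ℝ) (hf : ContinuousOn f (Set.Icc 0 t)) :
    (1 / Real.Gamma α) * ∫ s in (0:ℝ)..t, (t - s) ^ (α - 1) *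
        ((1 / Real.Gamma β) * ∫ ξ in (0:ℝ)..s, (s - ξ) ^ (β - 1) * f ξ)
      = (1 / Real.Gamma (α + β)) * ∫ s in (0:ℝ)..t, (t - s) ^ (α + β - 1) * f s := by
  have hGα : (0:ℝ) < Real.Gamma α := Real.Gamma_pos_of_pos hα
  have hGβ : (0:ℝ) < Real.Gamma β := Real.Gamma_pos_of_pos hβ
  have hGαβ : (0:ℝ) < Real.Gamma (α + β) := Real.Gamma_pos_of_pos (by linarith)
  have key := swap_lemma α β t hα hβ ht f hf
  have rearr : ∀ s : ℝ, (t - s) ^ (α - 1) *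
      ((1 / Real.Gamma β) * ∫ ξ in (0:ℝ)..s, (s - ξ) ^ (β - 1) * f ξ)
      = (1 / Real.Gamma β) * ((t - s) ^ (α - 1) *
          ∫ ξ in (0:ℝ)..s, (s - ξ) ^ (β - 1) * f ξ) := fun s => by ring
  simp_rw [rearr]
  rw [intervalIntegral.integral_const_mul, key]
  field_simp
end

section
/- Let α > 0 and μ be real numbers, and let u₀ : ℝ → ℝ be u₀(x) = tanh(x/√2). Then for every real x and every t > 0, (1/Γ(α)) ∫₀ᵗ (t−s)^{α−1} · [μ u₀(x) u₀′(x) − 18 u₀(x) u₀″(x)² − 36 u₀′(x)² u₀″(x) − 24 u₀(x) u₀′(x) u₀‴(x) − 3 u₀(x)² u₀⁗(x) + u₀⁗(x) + u₀⁶⁾(x)] ds = (μ tanh(x/√2) sech²(x/√2) / (√2 Γ(α+1))) · t^{α}. -/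
open Real intervalIntegral

noncomputable def T (x : ℝ) : ℝ := Real.tanh (x / Real.sqrt 2)

lemma sq2 : Real.sqrt 2 * Real.sqrt 2 = 2 := Real.mul_self_sqrt (by norm_num)
lemma sq2ne : Real.sqrt 2 ≠ 0 := by positivity
lemma s2p2 : Real.sqrt 2 ^ 2 = 2 := Real.sq_sqrt (by norm_num)
lemma s2p3 : Real.sqrt 2 ^ 3 = 2 * Real.sqrt 2 := by rw [pow_succ, s2p2]
lemma s2p4 : Real.sqrt 2 ^ 4 = 4 := by rw [show (4:ℕ)=2*2 from rfl, pow_mul, s2p2]; norm_num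

lemma one_sub_T_sq (x : ℝ) : 1 - T x ^ 2 = (1 / Real.cosh (x / Real.sqrt 2)) ^ 2 := by
  have hc := Real.cosh_pos (x / Real.sqrt 2)
  have h := Real.cosh_sq_sub_sinh_sq (x / Real.sqrt 2)
  rw [T, Real.tanh_eq_sinh_div_cosh]
  field_simp
  exact h

lemma hT (x : ℝ) : HasDerivAt T ((1 - T x ^ 2) / Real.sqrt 2) x := by
  have hc := Real.cosh_pos (x / Real.sqrt 2)
  have h1 : HasDerivAt (fun x : ℝ => x / Real.sqrt 2) (1 / Real.sqrt 2) x := by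
    simpa using (hasDerivAt_id x).div_const (Real.sqrt 2)
  have hs := (Real.hasDerivAt_sinh (x / Real.sqrt 2)).comp x h1
  have hcc := (Real.hasDerivAt_cosh (x / Real.sqrt 2)).comp x h1
  have hd := hs.div hcc hc.ne'
  have heq : T = fun y => (Real.sinh ∘ fun x => x / Real.sqrt 2) y / (Real.cosh ∘ fun x => x / Real.sqrt 2) y := by
    funext y; rw [T, Real.tanh_eq_sinh_div_cosh]; rfl
  rw [heq]
  refine hd.congr_deriv ?_
  have h := Real.cosh_sq_sub_sinh_sq (x / Real.sqrt 2)
  simp only [Function.comp_apply]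
  field_simp

-- core derivative lemmas: d/dx gₙ(T x) = g_{n+1}(T x)/√2
lemma hg1 (x : ℝ) : HasDerivAt (fun y => 1 - T y ^ 2)
    ((-2 * T x * (1 - T x ^ 2)) / Real.sqrt 2) x := by
  have h := ((hT x).pow 2).const_sub 1
  refine h.congr_deriv ?_
  field_simp
  rw [show (2:ℕ)-1 = 1 from rfl]; push_cast; ring

lemma hg2 (x : ℝ) : HasDerivAt (fun y => -2 * T y * (1 - T y ^ 2))
    (((1 - T x ^ 2) * (6 * T x ^ 2 - 2)) / Real.sqrt 2) x := by
  have h := ((hT x).const_mul (-2)).mul (((hT x).pow 2).const_sub 1)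
  refine h.congr_deriv ?_
  field_simp
  ring_nf
  simp only [Pi.pow_apply, Pi.mul_apply, Pi.sub_apply, Pi.add_apply]
  try ring

lemma hg3 (x : ℝ) : HasDerivAt (fun y => (1 - T y ^ 2) * (6 * T y ^ 2 - 2))
    ((T x * ((1 - T x ^ 2) * (16 - 24 * T x ^ 2))) / Real.sqrt 2) x := by
  have h := (((hT x).pow 2).const_sub 1).mul ((((hT x).pow 2).const_mul 6).sub_const 2)
  refine h.congr_deriv ?_
  field_simp
  ring_nf
  simp only [Pi.pow_apply, Pi.mul_apply, Pi.sub_apply, Pi.add_apply]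
  try ring

lemma hg4 (x : ℝ) : HasDerivAt (fun y => T y * ((1 - T y ^ 2) * (16 - 24 * T y ^ 2)))
    (((1 - T x ^ 2) * (120 * T x ^ 4 - 120 * T x ^ 2 + 16)) / Real.sqrt 2) x := by
  have h := (hT x).mul ((((hT x).pow 2).const_sub 1).mul
    ((((hT x).pow 2).const_mul 24).const_sub 16))
  refine h.congr_deriv ?_
  field_simp
  ring_nf
  simp only [Pi.pow_apply, Pi.mul_apply, Pi.sub_apply, Pi.add_apply]
  try ring

lemma hg5 (x : ℝ) : HasDerivAt (fun y => (1 - T y ^ 2) * (120 * T y ^ 4 - 120 * T y ^ 2 + 16))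
    ((T x * (1 - T x ^ 2) * (-720 * T x ^ 4 + 960 * T x ^ 2 - 272)) / Real.sqrt 2) x := by
  have h := (((hT x).pow 2).const_sub 1).mul
    (((((hT x).pow 4).const_mul 120).sub (((hT x).pow 2).const_mul 120)).add_const 16)
  refine h.congr_deriv ?_
  field_simp
  ring_nf
  simp only [Pi.pow_apply, Pi.mul_apply, Pi.sub_apply, Pi.add_apply]
  try ring

section derivs
variable (u₀ : ℝ → ℝ) (hu₀ : ∀ x, u₀ x = Real.tanh (x / Real.sqrt 2))

lemma d1 (hu₀ : ∀ x, u₀ x = Real.tanh (x / Real.sqrt 2)) :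
    deriv u₀ = fun x => (1 - T x ^ 2) / Real.sqrt 2 := by
  have : u₀ = T := funext fun x => hu₀ x
  rw [this]; funext x; exact (hT x).deriv

lemma d2 (hu₀ : ∀ x, u₀ x = Real.tanh (x / Real.sqrt 2)) :
    iteratedDeriv 2 u₀ = fun x => (-2 * T x * (1 - T x ^ 2)) / 2 := by
  conv_lhs => rw [show (2:ℕ) = 1 + 1 from rfl]
  rw [iteratedDeriv_succ, iteratedDeriv_one, d1 u₀ hu₀]
  funext x
  have h := ((hg1 x).div_const (Real.sqrt 2)).deriv
  rw [h, div_div, sq2]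

lemma d3 (hu₀ : ∀ x, u₀ x = Real.tanh (x / Real.sqrt 2)) :
    iteratedDeriv 3 u₀ = fun x => ((1 - T x ^ 2) * (6 * T x ^ 2 - 2)) / (2 * Real.sqrt 2) := by
  conv_lhs => rw [show (3:ℕ) = 2 + 1 from rfl]
  rw [iteratedDeriv_succ, d2 u₀ hu₀]
  funext x
  have h := ((hg2 x).div_const 2).deriv
  rw [h, div_div, mul_comm (Real.sqrt 2) 2]

lemma d4 (hu₀ : ∀ x, u₀ x = Real.tanh (x / Real.sqrt 2)) :
    iteratedDeriv 4 u₀ = fun x => (T x * ((1 - T x ^ 2) * (16 - 24 * T x ^ 2))) / 4 := by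
  conv_lhs => rw [show (4:ℕ) = 3 + 1 from rfl]
  rw [iteratedDeriv_succ, d3 u₀ hu₀]
  funext x
  have h := ((hg3 x).div_const (2 * Real.sqrt 2)).deriv
  rw [h, div_div]
  congr 1
  linear_combination 2 * sq2

lemma d5 (hu₀ : ∀ x, u₀ x = Real.tanh (x / Real.sqrt 2)) :
    iteratedDeriv 5 u₀ = fun x =>
      ((1 - T x ^ 2) * (120 * T x ^ 4 - 120 * T x ^ 2 + 16)) / (4 * Real.sqrt 2) := by
  conv_lhs => rw [show (5:ℕ) = 4 + 1 from rfl]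
  rw [iteratedDeriv_succ, d4 u₀ hu₀]
  funext x
  have h := ((hg4 x).div_const 4).deriv
  rw [h, div_div, mul_comm (Real.sqrt 2) 4]

lemma d6 (hu₀ : ∀ x, u₀ x = Real.tanh (x / Real.sqrt 2)) :
    iteratedDeriv 6 u₀ = fun x =>
      (T x * (1 - T x ^ 2) * (-720 * T x ^ 4 + 960 * T x ^ 2 - 272)) / 8 := by
  conv_lhs => rw [show (6:ℕ) = 5 + 1 from rfl]
  rw [iteratedDeriv_succ, d5 u₀ hu₀]
  funext x
  have h := ((hg5 x).div_const (4 * Real.sqrt 2)).deriv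
  rw [h, div_div]
  congr 1
  linear_combination 4 * sq2

end derivs

lemma bracket_eq (μ : ℝ) (u₀ : ℝ → ℝ) (hu₀ : ∀ x, u₀ x = Real.tanh (x / Real.sqrt 2)) (x : ℝ) :
    μ * u₀ x * deriv u₀ x - 18 * u₀ x * (iteratedDeriv 2 u₀ x) ^ 2
      - 36 * (deriv u₀ x) ^ 2 * iteratedDeriv 2 u₀ x
      - 24 * u₀ x * deriv u₀ x * iteratedDeriv 3 u₀ x
      - 3 * (u₀ x) ^ 2 * iteratedDeriv 4 u₀ x
      + iteratedDeriv 4 u₀ x + iteratedDeriv 6 u₀ x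
    = μ * T x * (1 - T x ^ 2) / Real.sqrt 2 := by
  rw [d1 u₀ hu₀, d2 u₀ hu₀, d3 u₀ hu₀, d4 u₀ hu₀, d6 u₀ hu₀,
    show u₀ x = T x from hu₀ x]
  field_simp
  ring_nf
  simp only [s2p2, s2p3, s2p4]
  try ring

/-- First NIM iterate for the sixth-order time-fractional Cahn–Hilliard equation
with initial datum `tanh(x/√2)`:
`J^α(μu₀u₀′ − 18u₀u₀″² − 36u₀′²u₀″ − 24u₀u₀′u₀‴ − 3u₀²u₀⁗ + u₀⁗ + u₀⁶⁾)
  = (μ tanh(x/√2) sech²(x/√2)/(√2 Γ(α+1))) t^α`. -/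
theorem stmt_12 (α μ : ℝ) (hα : 0 < α)
    (u₀ : ℝ → ℝ) (hu₀ : ∀ x, u₀ x = Real.tanh (x / Real.sqrt 2)) :
    ∀ (x t : ℝ), 0 < t →
      (1 / Real.Gamma α) * ∫ s in (0:ℝ)..t, (t - s) ^ (α - 1) *
          (μ * u₀ x * deriv u₀ x - 18 * u₀ x * (iteratedDeriv 2 u₀ x) ^ 2
            - 36 * (deriv u₀ x) ^ 2 * iteratedDeriv 2 u₀ x
            - 24 * u₀ x * deriv u₀ x * iteratedDeriv 3 u₀ x
            - 3 * (u₀ x) ^ 2 * iteratedDeriv 4 u₀ x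
            + iteratedDeriv 4 u₀ x + iteratedDeriv 6 u₀ x)
        = μ * Real.tanh (x / Real.sqrt 2) * (1 / Real.cosh (x / Real.sqrt 2)) ^ 2
            / (Real.sqrt 2 * Real.Gamma (α + 1)) * t ^ α := by
  intro x t ht
  set C := μ * T x * (1 - T x ^ 2) / Real.sqrt 2 with hC
  have hbr := bracket_eq μ u₀ hu₀ x
  rw [hbr]
  have hint : (∫ s in (0:ℝ)..t, (t - s) ^ (α - 1) * C) = C * (t ^ α / α) := by
    have h1 : (∫ s in (0:ℝ)..t, (t - s) ^ (α - 1) * C)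
        = (∫ s in (0:ℝ)..t, (t - s) ^ (α - 1)) * C := by
      rw [intervalIntegral.integral_mul_const]
    have h2 : (∫ s in (0:ℝ)..t, (t - s) ^ (α - 1)) = ∫ s in (0:ℝ)..t, s ^ (α - 1) := by
      simpa using intervalIntegral.integral_comp_sub_left (fun s => s ^ (α - 1)) t (a := 0) (b := t)
    have h3 : (∫ s in (0:ℝ)..t, s ^ (α - 1)) = t ^ α / α := by
      rw [integral_rpow (Or.inl (by linarith))]
      rw [Real.zero_rpow (by linarith : α - 1 + 1 ≠ 0)]
      norm_num
    rw [h1, h2, h3]; ring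
  rw [hint]
  have hG : Real.Gamma (α + 1) = α * Real.Gamma α := Real.Gamma_add_one hα.ne'
  have hGpos : 0 < Real.Gamma α := Real.Gamma_pos_of_pos hα
  rw [hG, hC, ← one_sub_T_sq x, show Real.tanh (x / Real.sqrt 2) = T x from rfl]
  field_simp
  try ring
end
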